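/- The center of the algebra A_1 = ℂ⟨x,y⟩/(xy − yx − x) is exactly ℂ (the scalars). -/

import Mathlib

noncomputable section

/-- The free algebra `ℂ⟨x,y⟩` on two generators. -/
abbrev FreeTwo : Type := FreeAlgebra ℂ (Fin 2)

/-- The generator `x`. -/
def Xgen : FreeTwo := FreeAlgebra.ι ℂ 0

/-- The generator `y`. -/
def Ygen : FreeTwo := FreeAlgebra.ι ℂ 1

/-- The relation `x·(a·y) = (a·y)·x + x`, i.e. `x·a·y − a·y·x − x = 0`. -/
def relA (a : ℂ) : FreeTwo → FreeTwo → Prop := fun p q =>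
  p = Xgen * (a • Ygen) ∧ q = (a • Ygen) * Xgen + Xgen

/-- The algebra `A_a = ℂ⟨x,y⟩/(x·a·y − a·y·x − x)`. -/
abbrev Aalg (a : ℂ) : Type := RingQuot (relA a)

/-- The quotient map `ℂ⟨x,y⟩ → A_a`. -/
def mkA (a : ℂ) : FreeTwo →ₐ[ℂ] Aalg a := RingQuot.mkAlgHom ℂ (relA a)


/-- The algebra `A_1 = ℂ⟨x,y⟩/(xy − yx − x)`. -/
abbrev A1 : Type := Aalg 1

open Polynomial

/-! Since `y xⁿ = xⁿ (y - n)`, every element of `A₁` is a normal form `∑ xⁱ qᵢ(y)`.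
Let `A₁` act on `ℂ[X]` by `x ↦ X·` and `y ↦ -X d/dX`; then `xⁱ q(y)` sends `Xⁿ` to
`q(-n) Xⁿ⁺ⁱ`, and since a polynomial vanishing at every `-n` is zero, the action is faithful.
An operator `T` commuting with multiplication by `X` is multiplication by `T 1`, and commuting
with `X d/dX` forces `T 1` to be a constant. So a central element acts as a scalar `c`, hence
equals `c`. -/

theorem mul_pow_eq_pow_mul_sub_of_mul_eq {R : Type*} [Ring R] {x y : R} (h : x * y = y * x + x)
    (n : ℕ) : y * x ^ n = x ^ n * (y - n) := by
  induction n with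
  | zero => simp
  | succ n ih =>
    have hyx : y * x = x * (y - 1) := by rw [mul_sub, mul_one, h, add_sub_cancel_right]
    rw [pow_succ, ← mul_assoc, ih, mul_assoc, sub_mul, hyx, Nat.cast_comm, Nat.cast_succ]
    noncomm_ring

theorem Submodule.eq_top_of_one_mem_of_mul_mem {R A : Type*} [CommSemiring R] [Semiring A]
    [Algebra R A] {s : Set A} (hs : Algebra.adjoin R s = ⊤) {S : Submodule R A} (h1 : 1 ∈ S)
    (hmul : ∀ a ∈ s, ∀ b ∈ S, a * b ∈ S) : S = ⊤ := by
  have hclosure : (Submonoid.closure s : Set A) ⊆ S := fun m hm => by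
    induction hm using Submonoid.closure_induction_left with
    | one => exact h1
    | mul_left a ha b _ hb => exact hmul a ha b hb
  rw [eq_top_iff, ← Algebra.top_toSubmodule, ← hs, Algebra.adjoin_eq_span]
  exact Submodule.span_le.mpr hclosure

namespace Polynomial

variable {K : Type*} [CommRing K]

def euler : Module.End K K[X] := LinearMap.mulLeft K X ∘ₗ derivative

theorem euler_apply (f : K[X]) : euler f = X * derivative f := rfl

theorem euler_X_pow (n : ℕ) : euler (X ^ n : K[X]) = (n : K) • X ^ n := by
  cases n with
  | zero => simp [euler_apply]
  | succ n => rw [euler_apply, derivative_X_pow, smul_eq_C_mul]; push_cast; ring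

theorem euler_X_mul (f : K[X]) : euler (X * f) = X * f + X * euler f := by
  simp only [euler_apply, derivative_mul, derivative_X]; ring

theorem mulLeft_X_mul_neg_euler :
    LinearMap.mulLeft K X * -euler = -euler * LinearMap.mulLeft K (X : K[X]) +
      LinearMap.mulLeft K X := by
  refine LinearMap.ext fun f => ?_
  simp only [LinearMap.add_apply, Module.End.mul_apply, LinearMap.neg_apply,
    LinearMap.mulLeft_apply, euler_X_mul]
  ring

theorem hasEigenvector_neg_euler_X_pow [Nontrivial K] (n : ℕ) :
    (-euler : Module.End K K[X]).HasEigenvector (-n) (X ^ n) := by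
  refine Module.End.hasEigenvector_iff.mpr ⟨?_, (monic_X_pow n).ne_zero⟩
  rw [Module.End.mem_genEigenspace_one, LinearMap.neg_apply, euler_X_pow, neg_smul]

theorem map_mul_of_commute_mulLeft_X {T : Module.End K K[X]}
    (hT : Commute T (LinearMap.mulLeft K X)) (f g : K[X]) : T (f * g) = f * T g := by
  have hX : ∀ h, T (X * h) = X * T h := fun h => LinearMap.congr_fun hT.eq h
  induction f using Polynomial.induction_on with
  | C a => rw [← smul_eq_C_mul, ← smul_eq_C_mul, map_smul]
  | add p q hp hq => rw [add_mul, map_add, hp, hq, add_mul]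
  | monomial n a ih =>
    rw [show C a * X ^ (n + 1) * g = X * (C a * X ^ n * g) by ring, hX, ih]
    ring

theorem exists_eq_algebraMap_of_commute [IsDomain K] [CharZero K] {T : Module.End K K[X]}
    (hX : Commute T (LinearMap.mulLeft K X)) (hE : Commute T euler) :
    ∃ c : K, T = algebraMap K _ c := by
  have hconst : derivative (T 1) = 0 := by
    have h := LinearMap.congr_fun hE.eq 1
    simp only [Module.End.mul_apply, euler_apply, derivative_one, mul_zero, map_zero] at h
    exact (mul_eq_zero.mp h.symm).resolve_left X_ne_zero
  refine ⟨(T 1).coeff 0, LinearMap.ext fun f => ?_⟩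
  rw [Module.algebraMap_end_apply, smul_eq_C_mul, ← eq_C_of_derivative_eq_zero hconst, mul_comm,
    ← map_mul_of_commute_mulLeft_X hX, mul_one]

end Polynomial

namespace A1

def x : A1 := mkA 1 Xgen

def y : A1 := mkA 1 Ygen

theorem x_mul_y : x * y = y * x + x := by
  simpa [mkA, x, y] using RingQuot.mkAlgHom_rel ℂ (s := relA 1) ⟨rfl, rfl⟩

theorem adjoin_x_y : Algebra.adjoin ℂ {x, y} = ⊤ := by
  have hxy : ({x, y} : Set A1) = mkA 1 '' Set.range (FreeAlgebra.ι ℂ) := by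
    ext a
    simp [Fin.exists_fin_two, x, y, Xgen, Ygen, eq_comm]
  rw [hxy, Algebra.adjoin_image, FreeAlgebra.adjoin_range_ι, Algebra.map_top,
    AlgHom.range_eq_top]
  exact RingQuot.mkAlgHom_surjective ℂ _


theorem y_mul_x_pow (n : ℕ) : y * x ^ n = x ^ n * (y - n) :=
  mul_pow_eq_pow_mul_sub_of_mul_eq x_mul_y n

def pbw : (ℕ →₀ ℂ[X]) →ₗ[ℂ] A1 :=
  Finsupp.lsum ℂ fun i => LinearMap.mulLeft ℂ (x ^ i) ∘ₗ (aeval y).toLinearMap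

theorem pbw_single (i : ℕ) (q : ℂ[X]) : pbw (Finsupp.single i q) = x ^ i * aeval y q := by
  simp [pbw]

theorem pbw_surjective : Function.Surjective pbw := by
  rw [← LinearMap.range_eq_top]
  refine Submodule.eq_top_of_one_mem_of_mul_mem adjoin_x_y
    ⟨Finsupp.single 0 1, by simp [pbw_single]⟩ ?_
  rintro a ha _ ⟨p, rfl⟩
  induction p using Finsupp.induction_linear with
  | zero => simp
  | add p q hp hq => rw [map_add, mul_add]; exact add_mem hp hq
  | single i q =>
    rcases ha with rfl | rfl
    · exact ⟨Finsupp.single (i + 1) q, by rw [pbw_single, pbw_single, pow_succ', mul_assoc]⟩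
    · refine ⟨Finsupp.single i ((X - C (i : ℂ)) * q), ?_⟩
      rw [pbw_single, pbw_single, ← mul_assoc, y_mul_x_pow, map_mul, mul_assoc]
      simp

def rep : A1 →ₐ[ℂ] Module.End ℂ ℂ[X] :=
  RingQuot.liftAlgHom ℂ ⟨FreeAlgebra.lift ℂ ![LinearMap.mulLeft ℂ X, -euler], by
    rintro _ _ ⟨rfl, rfl⟩
    simpa [Xgen, Ygen] using mulLeft_X_mul_neg_euler⟩

theorem rep_x : rep x = LinearMap.mulLeft ℂ X := by
  simp [rep, x, mkA, Xgen]

theorem rep_y : rep y = -euler := by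
  simp [rep, y, mkA, Ygen]

theorem rep_pbw_apply_X_pow (p : ℕ →₀ ℂ[X]) (n : ℕ) :
    rep (pbw p) (X ^ n) = p.sum fun i q => q.eval (-n : ℂ) • X ^ (n + i) := by
  rw [pbw, Finsupp.lsum_apply, map_finsuppSum, LinearMap.finsupp_sum_apply]
  refine Finsupp.sum_congr fun i _ => ?_
  rw [LinearMap.comp_apply, LinearMap.mulLeft_apply, map_mul, Module.End.mul_apply,
    AlgHom.toLinearMap_apply, ← aeval_algHom_apply, rep_y,
    Module.End.aeval_apply_of_hasEigenvector (hasEigenvector_neg_euler_X_pow n), map_pow, rep_x,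
    LinearMap.pow_mulLeft, map_smul, LinearMap.mulLeft_apply, pow_add, mul_comm]

theorem coeff_rep_pbw_apply_X_pow (p : ℕ →₀ ℂ[X]) (n i : ℕ) :
    (rep (pbw p) (X ^ n)).coeff (n + i) = (p i).eval (-n : ℂ) := by
  rw [rep_pbw_apply_X_pow, Finsupp.sum, finsetSum_coeff]
  simp +contextual [coeff_X_pow]

theorem rep_injective : Function.Injective rep := by
  refine (injective_iff_map_eq_zero rep).mpr fun z hz => ?_
  obtain ⟨p, rfl⟩ := pbw_surjective z
  suffices p = 0 by rw [this, map_zero]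
  ext i : 1
  have hroots : Set.range (fun n : ℕ => -(n : ℂ)) ⊆ {r | (p i).IsRoot r} := by
    rintro _ ⟨n, rfl⟩
    simpa [hz] using (coeff_rep_pbw_apply_X_pow p n i).symm
  exact eq_zero_of_infinite_isRoot _
    ((Set.infinite_range_of_injective (neg_injective.comp Nat.cast_injective)).mono hroots)

end A1

/-- The center of `A_1 = ℂ⟨x,y⟩/(xy − yx − x)` is exactly the scalars `ℂ`. -/
theorem A1_center_eq_scalars :
    ∀ z : A1, (∀ a : A1, z * a = a * z) ↔ ∃ c : ℂ, z = algebraMap ℂ A1 c := by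
  intro z
  refine ⟨fun hz => ?_, fun ⟨c, hc⟩ a => hc ▸ Algebra.commutes c a⟩
  have hx : Commute (A1.rep z) (LinearMap.mulLeft ℂ X) := by
    rw [← A1.rep_x, Commute, SemiconjBy, ← map_mul, ← map_mul, hz]
  have hy : Commute (A1.rep z) euler := by
    rw [← Commute.neg_right_iff, ← A1.rep_y, Commute, SemiconjBy, ← map_mul, ← map_mul, hz]
  obtain ⟨c, hc⟩ := exists_eq_algebraMap_of_commute hx hy
  exact ⟨c, A1.rep_injective (by rw [hc, AlgHom.commutes])⟩
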